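/- Let $n \geq 3$, $a \in (0, \frac{2}{n-1}]$, $m = 3^{(n-1)/2}$, and let $\mu : [0,1] \to [0,\infty)$ be continuous and non-decreasing with $\mu(0) = 0$. Suppose $\mathcal{U} : [3, T) \to [0,\infty)$ is continuous, and there is $\epsilon_0 > 0$ with $\mathcal{U}(z) \geq \epsilon_0 + \frac{1}{2 m^a} \int_3^z y^{-a\frac{n-1}{2}} \, \mathcal{U}(y)^{1+a} \, \mu\!\left( m^{-1} y^{-\frac{n-1}{2}} \mathcal{U}(y) \right) dy$ for all $z \in [3, T)$, and additionally $m^{-1} y^{-(n-1)/2} \mathcal{U}(y) \leq 1$ on $[3,T)$. If $\int_0^1 \mu(\tau) \tau^{a - 1 - \frac{2}{n-1}} d\tau = \infty$, then $T < \infty$. -/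
import Mathlib


open MeasureTheory Set

/-- The integral inequality from the blow-up argument forces a finite lifespan:
equivalently, the hypotheses cannot hold on all of `[3, ∞)` (i.e. with `T = ∞`). -/
theorem blowup_integral_inequality (n : ℕ) (hn : 3 ≤ n) (a : ℝ) (ha : 0 < a)
    (ha2 : a ≤ 2 / ((n:ℝ) - 1))
    (μ : ℝ → ℝ) (hμc : ContinuousOn μ (Set.Icc 0 1)) (hμm : MonotoneOn μ (Set.Icc 0 1))
    (hμ0 : μ 0 = 0) (hμnn : ∀ τ ∈ Set.Icc (0:ℝ) 1, 0 ≤ μ τ)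
    (m : ℝ) (hm : m = (3:ℝ) ^ (((n:ℝ) - 1) / 2))
    (U : ℝ → ℝ) (hUc : ContinuousOn U (Set.Ici 3))
    (hUnn : ∀ z ∈ Set.Ici (3:ℝ), 0 ≤ U z)
    (ε₀ : ℝ) (hε₀ : 0 < ε₀)
    (hsmall : ∀ y ∈ Set.Ici (3:ℝ), m⁻¹ * y ^ (-((n:ℝ) - 1) / 2) * U y ≤ 1)
    (hineq : ∀ z ∈ Set.Ici (3:ℝ),
        ε₀ + (1 / (2 * m ^ a)) * ∫ y in (3:ℝ)..z,
            y ^ (-a * ((n:ℝ) - 1) / 2) * (U y) ^ (1 + a)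
              * μ (m⁻¹ * y ^ (-((n:ℝ) - 1) / 2) * U y) ≤ U z)
    (hdiv : ¬ IntegrableOn (fun τ : ℝ => μ τ * τ ^ (a - 1 - 2 / ((n:ℝ) - 1)))
        (Set.Ioc 0 1) volume) :
    False := by
  -- basic notation
  set p : ℝ := ((n:ℝ) - 1) / 2 with hp_def
  have hn2 : (2:ℝ) ≤ (n:ℝ) - 1 := by
    have : (3:ℝ) ≤ (n:ℝ) := by exact_mod_cast hn
    linarith
  have hn1 : (0:ℝ) < (n:ℝ) - 1 := by linarith
  have hne : ((n:ℝ) - 1) ≠ 0 := ne_of_gt hn1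
  have hp1 : (1:ℝ) ≤ p := by rw [hp_def]; linarith
  have hp0 : (0:ℝ) < p := by linarith
  have hm0 : (0:ℝ) < m := by rw [hm]; positivity
  set c : ℝ := 1 / (2 * m ^ a) with hc_def
  have hc0 : (0:ℝ) < c := by rw [hc_def]; positivity
  have hexp1 : -((n:ℝ) - 1) / 2 = -p := by rw [hp_def]; ring
  -- the kernel and the primitive
  set τf : ℝ → ℝ := fun y => m⁻¹ * y ^ (-((n:ℝ) - 1) / 2) * U y with hτf_def
  set g : ℝ → ℝ := fun y => y ^ (-a * ((n:ℝ) - 1) / 2) * (U y) ^ (1 + a) * μ (τf y)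
    with hg_def
  set F : ℝ → ℝ := fun z => ε₀ + c * ∫ y in (3:ℝ)..z, g y with hF_def
  have hy0 : ∀ y : ℝ, y ∈ Ici (3:ℝ) → (0:ℝ) < y := fun y hy => lt_of_lt_of_le (by norm_num) hy
  have hτmem : ∀ y ∈ Ici (3:ℝ), τf y ∈ Icc (0:ℝ) 1 := by
    intro y hy
    refine ⟨?_, hsmall y hy⟩
    have h1 := hy0 y hy
    have h2 := hUnn y hy
    simp only [hτf_def]
    positivity
  have hμτnn : ∀ y ∈ Ici (3:ℝ), 0 ≤ μ (τf y) := fun y hy => hμnn _ (hτmem y hy)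
  have hgnn : ∀ y ∈ Ici (3:ℝ), 0 ≤ g y := by
    intro y hy
    have h1 := hy0 y hy
    have h2 := hUnn y hy
    have h3 := hμτnn y hy
    have h4 : (0:ℝ) ≤ y ^ (-a * ((n:ℝ) - 1) / 2) * (U y) ^ (1 + a) := by positivity
    simp only [hg_def]
    exact mul_nonneg h4 h3
  -- continuity facts
  have hτc : ContinuousOn τf (Ici 3) := by
    simp only [hτf_def]
    refine (continuousOn_const.mul ?_).mul hUc
    exact continuousOn_id.rpow_const fun y hy => Or.inl (ne_of_gt (hy0 y hy))
  have hgc : ContinuousOn g (Ici 3) := by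
    simp only [hg_def]
    refine ((continuousOn_id.rpow_const fun y hy => Or.inl (ne_of_gt (hy0 y hy))).mul
      (hUc.rpow_const fun y hy => Or.inr (by positivity))).mul ?_
    exact hμc.comp hτc fun y hy => hτmem y hy
  have hgint : ∀ z : ℝ, 3 ≤ z → IntervalIntegrable g volume 3 z := by
    intro z hz
    exact ContinuousOn.intervalIntegrable
      (hgc.mono (by rw [uIcc_of_le hz]; exact Icc_subset_Ici_self))
  have hFU : ∀ z ∈ Ici (3:ℝ), F z ≤ U z := hineq
  have hFε : ∀ z ∈ Ici (3:ℝ), ε₀ ≤ F z := by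
    intro z hz
    have h1 : 0 ≤ ∫ y in (3:ℝ)..z, g y := by
      apply intervalIntegral.integral_nonneg hz
      intro u hu
      exact hgnn u (mem_Ici.mpr hu.1)
    have h2 : 0 ≤ c * ∫ y in (3:ℝ)..z, g y := mul_nonneg hc0.le h1
    simp only [hF_def]
    linarith
  have hF0 : ∀ z ∈ Ici (3:ℝ), 0 < F z := fun z hz => lt_of_lt_of_le hε₀ (hFε z hz)
  have hF3 : F 3 = ε₀ := by simp [hF_def]
  -- the comparison function φ
  set φ : ℝ → ℝ := fun y => (ε₀ / m) * y ^ (-((n:ℝ) - 1) / 2) with hφ_def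
  have hφpos : ∀ y ∈ Ici (3:ℝ), 0 < φ y := by
    intro y hy
    have h1 := hy0 y hy
    simp only [hφ_def]
    positivity
  have hφle : ∀ y ∈ Ici (3:ℝ), φ y ≤ τf y := by
    intro y hy
    have hU : ε₀ ≤ U y := le_trans (hFε y hy) (hFU y hy)
    have hyp : (0:ℝ) < y ^ (-((n:ℝ) - 1) / 2) := Real.rpow_pos_of_pos (hy0 y hy) _
    have hminv : (0:ℝ) ≤ m⁻¹ := by positivity
    have key := mul_le_mul_of_nonneg_left (mul_le_mul_of_nonneg_right hU hyp.le) hminv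
    simp only [hφ_def, hτf_def]
    calc ε₀ / m * y ^ (-((n:ℝ) - 1) / 2) = m⁻¹ * (ε₀ * y ^ (-((n:ℝ) - 1) / 2)) := by ring
      _ ≤ m⁻¹ * (U y * y ^ (-((n:ℝ) - 1) / 2)) := key
      _ = m⁻¹ * y ^ (-((n:ℝ) - 1) / 2) * U y := by ring
  have hφmem : ∀ y ∈ Ici (3:ℝ), φ y ∈ Icc (0:ℝ) 1 :=
    fun y hy => ⟨(hφpos y hy).le, le_trans (hφle y hy) (hτmem y hy).2⟩
  have hμφnn : ∀ y ∈ Ici (3:ℝ), 0 ≤ μ (φ y) := fun y hy => hμnn _ (hφmem y hy)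
  have hμφle : ∀ y ∈ Ici (3:ℝ), μ (φ y) ≤ μ (τf y) :=
    fun y hy => hμm (hφmem y hy) (hτmem y hy) (hφle y hy)
  -- lower bound for g
  have hglb : ∀ y ∈ Ici (3:ℝ), y ^ (-a * ((n:ℝ) - 1) / 2) * (F y) ^ (1 + a) * μ (φ y) ≤ g y := by
    intro y hy
    have h1 : (F y) ^ (1 + a) ≤ (U y) ^ (1 + a) :=
      Real.rpow_le_rpow (hF0 y hy).le (hFU y hy) (by positivity)
    have h2 := hμφle y hy
    have h3 := hμφnn y hy
    have hyp : (0:ℝ) ≤ y ^ (-a * ((n:ℝ) - 1) / 2) := (Real.rpow_pos_of_pos (hy0 y hy) _).le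
    have h4 : (0:ℝ) ≤ (U y) ^ (1 + a) := Real.rpow_nonneg (hUnn y hy) _
    simp only [hg_def]
    calc y ^ (-a * ((n:ℝ) - 1) / 2) * (F y) ^ (1 + a) * μ (φ y)
        ≤ y ^ (-a * ((n:ℝ) - 1) / 2) * (U y) ^ (1 + a) * μ (φ y) :=
          mul_le_mul_of_nonneg_right (mul_le_mul_of_nonneg_left h1 hyp) h3
      _ ≤ y ^ (-a * ((n:ℝ) - 1) / 2) * (U y) ^ (1 + a) * μ (τf y) :=
          mul_le_mul_of_nonneg_left h2 (mul_nonneg hyp h4)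
  -- the comparison integrand
  set h : ℝ → ℝ := fun y => c * (y ^ (-a * ((n:ℝ) - 1) / 2) * μ (φ y)) with hh_def
  set D : ℝ → ℝ := fun y => (F y) ^ (-a - 1) * (c * g y) with hD_def
  have hφc : ContinuousOn φ (Ici 3) := by
    simp only [hφ_def]
    exact continuousOn_const.mul (continuousOn_id.rpow_const fun y hy => Or.inl (ne_of_gt (hy0 y hy)))
  have hhc : ContinuousOn h (Ici 3) := by
    simp only [hh_def]
    refine continuousOn_const.mul (ContinuousOn.mul ?_ ?_)
    · exact continuousOn_id.rpow_const fun y hy => Or.inl (ne_of_gt (hy0 y hy))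
    · exact hμc.comp hφc fun y hy => hφmem y hy
  -- continuity of F on [3, Z]
  have hFc : ∀ Z : ℝ, 3 ≤ Z → ContinuousOn F (Icc 3 Z) := by
    intro Z hZ
    simp only [hF_def]
    apply continuousOn_const.add (continuousOn_const.mul ?_)
    have hint : IntegrableOn g (uIcc 3 Z) := by
      rw [uIcc_of_le hZ]
      exact (hgc.mono Icc_subset_Ici_self).integrableOn_compact isCompact_Icc
    have := intervalIntegral.continuousOn_primitive_interval hint
    rwa [uIcc_of_le hZ] at this
  -- the key a priori bound
  have hB : ∀ Z ∈ Ici (3:ℝ), (∫ y in (3:ℝ)..Z, h y) ≤ a⁻¹ * ε₀ ^ (-a) := by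
    intro Z hZ
    rw [mem_Ici] at hZ
    -- pointwise bound h ≤ D on [3, Z]
    have hpt : ∀ y ∈ Icc (3:ℝ) Z, h y ≤ D y := by
      intro y hy
      have hy3 : y ∈ Ici (3:ℝ) := mem_Ici.mpr hy.1
      have hF0' := hF0 y hy3
      have key : (F y) ^ (-a - 1) * (F y) ^ (1 + a) = 1 := by
        rw [← Real.rpow_add hF0', show (-a - 1 + (1 + a) : ℝ) = 0 by ring, Real.rpow_zero]
      have hD0 : (0:ℝ) ≤ (F y) ^ (-a - 1) := (Real.rpow_pos_of_pos hF0' _).le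
      simp only [hh_def, hD_def]
      calc c * (y ^ (-a * ((n:ℝ) - 1) / 2) * μ (φ y))
          = (F y) ^ (-a - 1) * (F y) ^ (1 + a) * (c * (y ^ (-a * ((n:ℝ) - 1) / 2) * μ (φ y)))
            := by rw [key, one_mul]
        _ = (F y) ^ (-a - 1) * (c * (y ^ (-a * ((n:ℝ) - 1) / 2) * (F y) ^ (1 + a) * μ (φ y)))
            := by ring
        _ ≤ (F y) ^ (-a - 1) * (c * g y) := by
            apply mul_le_mul_of_nonneg_left _ hD0
            exact mul_le_mul_of_nonneg_left (hglb y hy3) hc0.le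
    -- derivative of the primitive
    have hFder : ∀ x ∈ Ioo (3:ℝ) Z, HasDerivAt F (c * g x) x := by
      intro x hx
      have hopen : IsOpen (Ioi (3:ℝ)) := isOpen_Ioi
      have hgo : ContinuousOn g (Ioi 3) := hgc.mono Ioi_subset_Ici_self
      have hmeas : StronglyMeasurableAtFilter g (nhds x) volume :=
        hgo.stronglyMeasurableAtFilter hopen x hx.1
      have hca : ContinuousAt g x := hgo.continuousAt (hopen.mem_nhds hx.1)
      have h1 : HasDerivAt (fun u => ∫ y in (3:ℝ)..u, g y) (g x) x :=
        intervalIntegral.integral_hasDerivAt_right (hgint x hx.1.le) hmeas hca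
      have h2 := (h1.const_mul c).const_add ε₀
      simpa [hF_def] using h2
    -- the transformed function G
    set G : ℝ → ℝ := fun t => -(a⁻¹ * (F t) ^ (-a)) with hG_def
    have hGder : ∀ x ∈ Ioo (3:ℝ) Z, HasDerivAt G (D x) x := by
      intro x hx
      have hx3 : x ∈ Ici (3:ℝ) := mem_Ici.mpr hx.1.le
      have h1 : HasDerivAt (fun t => (F t) ^ (-a)) ((c * g x) * (-a) * (F x) ^ (-a - 1)) x :=
        (hFder x hx).rpow_const (Or.inl (ne_of_gt (hF0 x hx3)))
      have h2 := (h1.const_mul a⁻¹).neg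
      have h3 : -(a⁻¹ * ((c * g x) * (-a) * (F x) ^ (-a - 1))) = D x := by
        simp only [hD_def]
        field_simp
      rw [h3] at h2
      exact h2
    have hGcont : ContinuousOn G (Icc 3 Z) := by
      simp only [hG_def]
      apply ContinuousOn.neg
      apply continuousOn_const.mul
      exact (hFc Z hZ).rpow_const fun y hy => Or.inl (ne_of_gt (hF0 y (mem_Ici.mpr hy.1)))
    have hDc : ContinuousOn D (Icc 3 Z) := by
      simp only [hD_def]
      apply ContinuousOn.mul
      · exact (hFc Z hZ).rpow_const fun y hy => Or.inl (ne_of_gt (hF0 y (mem_Ici.mpr hy.1)))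
      · exact continuousOn_const.mul (hgc.mono Icc_subset_Ici_self)
    have hDint : IntervalIntegrable D volume 3 Z := by
      apply ContinuousOn.intervalIntegrable
      rwa [uIcc_of_le hZ]
    have hftc : (∫ y in (3:ℝ)..Z, D y) = G Z - G 3 := by
      apply intervalIntegral.integral_eq_sub_of_hasDeriv_right
      · rwa [uIcc_of_le hZ]
      · intro x hx
        rw [min_eq_left hZ, max_eq_right hZ] at hx
        exact (hGder x hx).hasDerivWithinAt
      · exact hDint
    have hG3 : G 3 = -(a⁻¹ * ε₀ ^ (-a)) := by rw [hG_def]; simp only [hF3]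
    have hGZ : G Z ≤ 0 := by
      have h1 : (0:ℝ) < (F Z) ^ (-a) := Real.rpow_pos_of_pos (hF0 Z (mem_Ici.mpr hZ)) _
      have ha' : (0:ℝ) < a⁻¹ := by positivity
      simp only [hG_def]
      nlinarith
    have hhint : IntervalIntegrable h volume 3 Z := by
      apply ContinuousOn.intervalIntegrable
      rw [uIcc_of_le hZ]
      exact hhc.mono Icc_subset_Ici_self
    have hmono : (∫ y in (3:ℝ)..Z, h y) ≤ ∫ y in (3:ℝ)..Z, D y :=
      intervalIntegral.integral_mono_on hZ hhint hDint hpt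
    rw [hftc, hG3] at hmono
    refine le_trans hmono ?_
    rw [sub_neg_eq_add]
    exact add_le_iff_nonpos_left.mpr hGZ
  -- change of variables: relate ∫ h with the divergent integral
  set e : ℝ := a - 1 - 2 / ((n:ℝ) - 1) with he_def
  set f₀ : ℝ → ℝ := fun τ => μ τ * τ ^ e with hf₀_def
  set K : ℝ := c / (p * (ε₀ / m) ^ (1 + e)) with hK_def
  have hεm : (0:ℝ) < ε₀ / m := by positivity
  have hεme : (0:ℝ) < (ε₀ / m) ^ (1 + e) := Real.rpow_pos_of_pos hεm _
  have hK0 : (0:ℝ) < K := by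
    rw [hK_def]
    positivity
  have hf₀c : ContinuousOn f₀ (Ioc (0:ℝ) 1) := by
    simp only [hf₀_def]
    refine (hμc.mono Ioc_subset_Icc_self).mul ?_
    exact continuousOn_id.rpow_const fun x hx => Or.inl (ne_of_gt hx.1)
  have hA : K * (ε₀ / m) ^ (1 + e) = c / p := by
    rw [hK_def]
    field_simp
  -- the substitution identity
  set φd : ℝ → ℝ := fun y => (ε₀ / m) * ((-((n:ℝ) - 1) / 2) * y ^ (-((n:ℝ) - 1) / 2 - 1))
    with hφd_def
  have hφder : ∀ x ∈ Ici (3:ℝ), HasDerivAt φ (φd x) x := by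
    intro x hx
    have h1 := (Real.hasDerivAt_rpow_const (p := -((n:ℝ) - 1) / 2)
      (Or.inl (ne_of_gt (hy0 x hx)))).const_mul (ε₀ / m)
    simp only [hφ_def, hφd_def]
    exact h1
  have hsub_id : ∀ y ∈ Ici (3:ℝ), φd y * (K * f₀ (φ y)) = -(h y) := by
    intro y hy
    have hy' := hy0 y hy
    have h1 : (φ y) ^ e = (ε₀ / m) ^ e * y ^ ((-((n:ℝ) - 1) / 2) * e) := by
      simp only [hφ_def]
      rw [Real.mul_rpow hεm.le (Real.rpow_pos_of_pos hy' _).le, ← Real.rpow_mul hy'.le]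
    have hexp_eq : (-((n:ℝ) - 1) / 2 - 1) + (-((n:ℝ) - 1) / 2) * e = -a * ((n:ℝ) - 1) / 2 := by
      rw [he_def]
      field_simp
      ring
    have h2 : y ^ (-((n:ℝ) - 1) / 2 - 1) * y ^ ((-((n:ℝ) - 1) / 2) * e)
        = y ^ (-a * ((n:ℝ) - 1) / 2) := by
      rw [← Real.rpow_add hy', hexp_eq]
    have h3 : (ε₀ / m) * (ε₀ / m) ^ e = (ε₀ / m) ^ (1 + e) := by
      rw [Real.rpow_add hεm, Real.rpow_one]
    calc φd y * (K * f₀ (φ y))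
        = ((ε₀ / m) * (ε₀ / m) ^ e) * K * (-((n:ℝ) - 1) / 2)
            * (y ^ (-((n:ℝ) - 1) / 2 - 1) * y ^ ((-((n:ℝ) - 1) / 2) * e)) * μ (φ y) := by
          simp only [hφd_def, hf₀_def]
          rw [h1]
          ring
      _ = (K * (ε₀ / m) ^ (1 + e)) * (-((n:ℝ) - 1) / 2) * y ^ (-a * ((n:ℝ) - 1) / 2) * μ (φ y)
            := by rw [h3, h2]; ring
      _ = (c / p) * (-p) * y ^ (-a * ((n:ℝ) - 1) / 2) * μ (φ y) := by rw [hA, hexp1]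
      _ = -(h y) := by
          simp only [hh_def]
          field_simp
  -- endpoint δ
  set δ : ℝ := φ 3 with hδ_def
  have h33 : (3:ℝ) ∈ Ici (3:ℝ) := self_mem_Ici
  have hδpos : 0 < δ := hφpos 3 h33
  have hδ1 : δ ≤ 1 := (hφmem 3 h33).2
  have hφanti : ∀ Z : ℝ, 3 ≤ Z → φ Z ≤ δ := by
    intro Z hZ
    simp only [hδ_def, hφ_def]
    apply mul_le_mul_of_nonneg_left _ hεm.le
    exact Real.rpow_le_rpow_of_nonpos (by norm_num) hZ (by rw [hexp1]; linarith)
  have hφdc : ContinuousOn φd (Ici 3) := by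
    simp only [hφd_def]
    exact continuousOn_const.mul (continuousOn_const.mul
      (continuousOn_id.rpow_const fun y hy => Or.inl (ne_of_gt (hy0 y hy))))
  -- the uniform bound on the transformed integrals
  have hbound : ∀ Z : ℝ, 3 ≤ Z →
      (∫ τ in Set.Ioc (φ Z) δ, K * f₀ τ) ≤ a⁻¹ * ε₀ ^ (-a) := by
    intro Z hZ
    have himg : φ '' (uIcc (3:ℝ) Z) ⊆ Ioc 0 1 := by
      rintro u ⟨y, hy, rfl⟩
      rw [uIcc_of_le hZ] at hy
      have hy3 : y ∈ Ici (3:ℝ) := mem_Ici.mpr hy.1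
      exact ⟨hφpos y hy3, (hφmem y hy3).2⟩
    have hsub : (∫ x in (3:ℝ)..Z, φd x • ((fun u => K * f₀ u) ∘ φ) x)
        = ∫ u in (φ 3)..(φ Z), K * f₀ u := by
      apply intervalIntegral.integral_comp_smul_deriv''
      · rw [uIcc_of_le hZ]; exact hφc.mono Icc_subset_Ici_self
      · intro x hx
        rw [min_eq_left hZ, max_eq_right hZ] at hx
        exact (hφder x (mem_Ici.mpr hx.1.le)).hasDerivWithinAt
      · rw [uIcc_of_le hZ]; exact hφdc.mono Icc_subset_Ici_self
      · exact continuousOn_const.mul (hf₀c.mono himg)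
    have hcongr : (∫ x in (3:ℝ)..Z, φd x • ((fun u => K * f₀ u) ∘ φ) x)
        = ∫ x in (3:ℝ)..Z, -(h x) := by
      apply intervalIntegral.integral_congr
      intro x hx
      rw [uIcc_of_le hZ] at hx
      have hx3 : x ∈ Ici (3:ℝ) := mem_Ici.mpr hx.1
      simpa [smul_eq_mul, Function.comp] using hsub_id x hx3
    have hneg : (∫ x in (3:ℝ)..Z, -(h x)) = -(∫ x in (3:ℝ)..Z, h x) :=
      intervalIntegral.integral_neg
    have hsymm : (∫ u in (φ 3)..(φ Z), K * f₀ u) = -(∫ u in (φ Z)..(φ 3), K * f₀ u) :=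
      intervalIntegral.integral_symm _ _
    have hle : (∫ u in (φ Z)..(φ 3), K * f₀ u) ≤ a⁻¹ * ε₀ ^ (-a) := by
      have := hB Z (mem_Ici.mpr hZ)
      have heq : (∫ u in (φ Z)..(φ 3), K * f₀ u) = ∫ x in (3:ℝ)..Z, h x := by
        have h1 : -(∫ u in (φ Z)..(φ 3), K * f₀ u) = -(∫ x in (3:ℝ)..Z, h x) := by
          rw [← hsymm, ← hsub, hcongr, hneg]
        linarith
      rw [heq]; exact this
    have hIoc : (∫ τ in Set.Ioc (φ Z) δ, K * f₀ τ) = ∫ u in (φ Z)..(φ 3), K * f₀ u := by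
      rw [intervalIntegral.integral_of_le (by rw [← hδ_def]; exact hφanti Z hZ), hδ_def]
    rw [hIoc]
    exact hle
  -- nonnegativity of the integrand on (0, 1]
  have hf₀nn : ∀ τ ∈ Ioc (0:ℝ) 1, 0 ≤ K * f₀ τ := by
    intro τ hτ
    have h1 : 0 ≤ μ τ := hμnn τ (Ioc_subset_Icc_self hτ)
    have h2 : (0:ℝ) ≤ τ ^ e := (Real.rpow_pos_of_pos hτ.1 _).le
    simp only [hf₀_def]
    exact mul_nonneg hK0.le (mul_nonneg h1 h2)
  -- integrability on Ioc 0 δ via the improper-integral criterion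
  have hZseq : Filter.Tendsto (fun i : ℕ => φ (3 + (i:ℝ))) Filter.atTop (nhds 0) := by
    have h1 : Filter.Tendsto (fun i : ℕ => (3:ℝ) + (i:ℝ)) Filter.atTop Filter.atTop :=
      Filter.tendsto_atTop_add_const_left _ _ tendsto_natCast_atTop_atTop
    have h2 : Filter.Tendsto (fun x : ℝ => x ^ (-p)) Filter.atTop (nhds 0) := tendsto_rpow_neg_atTop hp0
    have h3 : Filter.Tendsto (fun i : ℕ => ((3:ℝ) + (i:ℝ)) ^ (-p)) Filter.atTop (nhds 0) := h2.comp h1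
    have h4 := h3.const_mul (ε₀ / m)
    rw [mul_zero] at h4
    simp only [hφ_def, hexp1]
    exact h4
  have hfi : ∀ i : ℕ, IntegrableOn (fun τ => K * f₀ τ) (Ioc (φ (3 + (i:ℝ))) δ) := by
    intro i
    have h3i : (3:ℝ) ≤ 3 + (i:ℝ) := le_add_of_nonneg_right (Nat.cast_nonneg i)
    have hi3 : (3:ℝ) + (i:ℝ) ∈ Ici (3:ℝ) := mem_Ici.mpr h3i
    have hsubset : Icc (φ (3 + (i:ℝ))) δ ⊆ Ioc (0:ℝ) 1 := by
      intro x hx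
      exact ⟨lt_of_lt_of_le (hφpos _ hi3) hx.1, le_trans hx.2 hδ1⟩
    have : ContinuousOn (fun τ => K * f₀ τ) (Icc (φ (3 + (i:ℝ))) δ) :=
      continuousOn_const.mul (hf₀c.mono hsubset)
    exact (this.integrableOn_compact isCompact_Icc).mono_set Ioc_subset_Icc_self
  have hnormbound : ∀ i : ℕ,
      (∫ τ in Set.Ioc (φ (3 + (i:ℝ))) δ, ‖K * f₀ τ‖) ≤ a⁻¹ * ε₀ ^ (-a) := by
    intro i
    have h3i : (3:ℝ) ≤ 3 + (i:ℝ) := le_add_of_nonneg_right (Nat.cast_nonneg i)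
    have hi3 : (3:ℝ) + (i:ℝ) ∈ Ici (3:ℝ) := mem_Ici.mpr h3i
    have heq : (∫ τ in Set.Ioc (φ (3 + (i:ℝ))) δ, ‖K * f₀ τ‖)
        = ∫ τ in Set.Ioc (φ (3 + (i:ℝ))) δ, K * f₀ τ := by
      apply setIntegral_congr_fun measurableSet_Ioc
      intro x hx
      have hx1 : x ∈ Ioc (0:ℝ) 1 :=
        ⟨lt_of_lt_of_le (hφpos _ hi3) hx.1.le, le_trans hx.2 hδ1⟩
      exact Real.norm_of_nonneg (hf₀nn x hx1)
    rw [heq]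
    exact hbound _ h3i
  have hInt : IntegrableOn (fun τ => K * f₀ τ) (Ioc (0:ℝ) δ) := by
    apply MeasureTheory.integrableOn_Ioc_of_intervalIntegral_norm_bounded_left
      (fun i => hfi i) hZseq
    exact Filter.Eventually.of_forall hnormbound
  have hf₀int1 : IntegrableOn f₀ (Ioc (0:ℝ) δ) := by
    have h2 := hInt.const_mul K⁻¹
    have h3 : (fun τ => K⁻¹ * (K * f₀ τ)) = f₀ := by
      funext τ
      rw [← mul_assoc, inv_mul_cancel₀ (ne_of_gt hK0), one_mul]
    rwa [h3] at h2
  have hf₀int2 : IntegrableOn f₀ (Ioc δ 1) := by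
    have hsubset : Icc δ 1 ⊆ Ioc (0:ℝ) 1 := fun x hx => ⟨lt_of_lt_of_le hδpos hx.1, hx.2⟩
    exact ((hf₀c.mono hsubset).integrableOn_compact isCompact_Icc).mono_set Ioc_subset_Icc_self
  have hf₀int : IntegrableOn f₀ (Ioc (0:ℝ) 1) := by
    have := hf₀int1.union hf₀int2
    rwa [Ioc_union_Ioc_eq_Ioc hδpos.le hδ1] at this
  exact hdiv hf₀int
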